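/- Let (G,T) be a bipartite graft with color classes A and B, let F be a minimum join, and let X ⊆ A be a maximal bipartitic extreme set. Then there is no edge of G joining a vertex of D_X to a vertex of C_X. -/

import Mathlib

open scoped Classical

variable {V : Type*}

/-- The `F`-weight of a walk: number of edges outside `F` minus number of edges in `F`. -/
noncomputable def walkWeight {G : SimpleGraph V} (F : Set (Sym2 V)) {x y : V}
    (p : G.Walk x y) : ℤ :=
  ((p.edges.filter fun e => e ∉ F).length : ℤ) -
    ((p.edges.filter fun e => e ∈ F).length : ℤ)

/-- The `F`-distance between `x` and `y`: the minimum `F`-weight of a path between them. -/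
noncomputable def distF (G : SimpleGraph V) (F : Set (Sym2 V)) (x y : V) : ℤ :=
  sInf {w : ℤ | ∃ p : G.Walk x y, p.IsPath ∧ walkWeight F p = w}

/-- `F` is a join of the graft `(G, T)`. -/
def IsJoin (G : SimpleGraph V) (T : Set V) (F : Set (Sym2 V)) : Prop :=
  F ⊆ G.edgeSet ∧ ∀ v : V, v ∈ T ↔ Odd {e ∈ F | v ∈ e}.ncard

/-- `F` is a minimum join of the graft `(G, T)`. -/
def IsMinJoin (G : SimpleGraph V) (T : Set V) (F : Set (Sym2 V)) : Prop :=
  IsJoin G T F ∧ ∀ F' : Set (Sym2 V), IsJoin G T F' → F.ncard ≤ F'.ncard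

/-- `(G, T)` is a graft: every connected component contains an even number of vertices of `T`. -/
def IsGraft (G : SimpleGraph V) (T : Set V) : Prop :=
  ∀ v : V, Even {u | u ∈ T ∧ G.Reachable v u}.ncard

/-- `X` is an extreme set: `d_F(x, y) ≥ 0` for all `x, y ∈ X`. -/
def IsExtremeSet (G : SimpleGraph V) (F : Set (Sym2 V)) (X : Set V) : Prop :=
  ∀ x ∈ X, ∀ y ∈ X, 0 ≤ distF G F x y

/-- `G` is bipartite with vertex set `Vset` and color classes `A`, `B`. -/
def IsBipartitionOn (G : SimpleGraph V) (Vset A B : Set V) : Prop :=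
  A ∪ B = Vset ∧ Disjoint A B ∧
    ∀ v w : V, G.Adj v w → (v ∈ A ∧ w ∈ B) ∨ (v ∈ B ∧ w ∈ A)

/-- `X` is a maximal bipartitic extreme set with respect to color classes `A`, `B`. -/
def MaxBipExtreme (G : SimpleGraph V) (F : Set (Sym2 V)) (A B X : Set V) : Prop :=
  IsExtremeSet G F X ∧ (X ⊆ A ∨ X ⊆ B) ∧
    ∀ X' : Set V, IsExtremeSet G F X' → (X' ⊆ A ∨ X' ⊆ B) → X ⊆ X' → X' = X

/-- `D_X`: the vertices of `Vset ∖ X` at negative `F`-distance from `X`. -/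
def Dset (G : SimpleGraph V) (F : Set (Sym2 V)) (Vset X : Set V) : Set V :=
  {y | y ∈ Vset ∧ y ∉ X ∧ ∃ x ∈ X, distF G F x y < 0}

/-- `C_X = Vset ∖ X ∖ D_X`. -/
def Cset (G : SimpleGraph V) (F : Set (Sym2 V)) (Vset X : Set V) : Set V :=
  (Vset \ X) \ Dset G F Vset X

/-- `min_{x ∈ X} d_F(x, y)`. -/
noncomputable def minDistX (G : SimpleGraph V) (F : Set (Sym2 V)) (X : Set V) (y : V) : ℤ :=
  sInf {d : ℤ | ∃ x ∈ X, distF G F x y = d}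

/-- The graph `G − S` obtained by deleting the vertices of `S`. -/
def gDelete (G : SimpleGraph V) (S : Set V) : SimpleGraph V where
  Adj v w := G.Adj v w ∧ v ∉ S ∧ w ∉ S
  symm := ⟨fun v w ⟨h, hv, hw⟩ => ⟨h.symm, hw, hv⟩⟩
  loopless := ⟨fun v h => G.irrefl h.1⟩

/-- The subgraph of `G` induced by `S`. -/
def gRestrict (G : SimpleGraph V) (S : Set V) : SimpleGraph V where
  Adj v w := G.Adj v w ∧ v ∈ S ∧ w ∈ S
  symm := ⟨fun v w ⟨h, hv, hw⟩ => ⟨h.symm, hw, hv⟩⟩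
  loopless := ⟨fun v h => G.irrefl h.1⟩

/-- `C` is (the vertex set of) a connected component of `G − X`. -/
def IsCompOf (G : SimpleGraph V) (X C : Set V) : Prop :=
  ∃ v, v ∉ X ∧ C = {u | (gDelete G X).Reachable v u}

/-- `δ_G(C)`: the edges of `G` with exactly one end in `C`. -/
def edgeBoundary (G : SimpleGraph V) (C : Set V) : Set (Sym2 V) :=
  {e | e ∈ G.edgeSet ∧ ∃ u v : V, e = s(u, v) ∧ u ∈ C ∧ v ∉ C}

/-- `X` is an `F`-combic set of the graft `(G, T)`. -/
def IsCombic (G : SimpleGraph V) (T : Set V) (F : Set (Sym2 V)) (X : Set V) : Prop :=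
  (∀ u v : V, s(u, v) ∈ F → ¬(u ∈ X ∧ v ∈ X)) ∧
  (∀ C : Set V, IsCompOf G X C → Odd (C ∩ T).ncard →
      (edgeBoundary G C ∩ F).ncard = 1) ∧
  (∀ C : Set V, IsCompOf G X C → Even (C ∩ T).ncard →
      edgeBoundary G C ∩ F = ∅)

/-- The rootlization of `G` by the mount `X`, root `r` and attachment `s`. -/
def rootlize (G : SimpleGraph V) (X : Set V) (r s : V) : SimpleGraph V :=
  SimpleGraph.fromRel fun v w => G.Adj v w ∨ (v = r ∧ w = s) ∨ (v = s ∧ w ∈ X)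

/-- The initial component of `r`: the connected component of `r` in the subgraph
induced by the vertices at nonpositive `F`-distance from `r`. -/
def initComp (G : SimpleGraph V) (F : Set (Sym2 V)) (r : V) : Set V :=
  {x | (gRestrict G {y | distF G F r y ≤ 0}).Reachable r x}

/-!
Let `y ∈ D_X` be adjacent to `z ∈ C_X`, and take `x ∈ X` and an `x`–`y` path `P` of negative
`F`-weight. Because `F` is a minimum join, every closed trail has nonnegative `F`-weight (otherwise
switching `F` along it would give a smaller join). Hence either `P` followed by the edge `yz`, or
the segment of `P` from `x` to `z`, is an `x`–`z` path of weight at most `w_F(P) + 1 ≤ 0`. Since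
`d_F(x, z) ≥ 0` this weight is `0`; being even, it puts `z` in the colour class `A` of `x`, and then
`X ∪ {z}` is a larger bipartitic extreme set.
-/

open SimpleGraph
open scoped symmDiff

theorem Set.ncard_symmDiff_add_two_mul_ncard_inter {α : Type*} {s t : Set α} (hs : s.Finite)
    (ht : t.Finite) : (s ∆ t).ncard + 2 * (s ∩ t).ncard = s.ncard + t.ncard := by
  have hdiff : (s ∆ t).ncard + (s ∩ t).ncard = (s ∪ t).ncard := by
    rw [symmDiff_eq_sup_sdiff_inf]
    exact Set.ncard_sdiff_add_ncard_of_subset inf_le_sup (hs.union ht)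
  have := Set.ncard_union_add_ncard_inter s t hs ht
  omega

theorem List.Nodup.ncard_setOf_mem_and {α : Type*} {l : List α} (hl : l.Nodup) (p : α → Prop)
    [DecidablePred p] : {a | a ∈ l ∧ p a}.ncard = (l.filter fun a => decide (p a)).length := by
  classical
  have hset : {a | a ∈ l ∧ p a} = ↑(l.filter fun a => decide (p a)).toFinset := by
    ext; simp
  rw [hset, Set.ncard_coe_finset, List.toFinset_card_of_nodup (hl.filter _)]

section Weight

variable {G : SimpleGraph V} {F : Set (Sym2 V)} {x y z : V}

theorem walkWeight_eq_length_sub (p : G.Walk x y) :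
    walkWeight F p = p.length - 2 * ((p.edges.filter fun e => e ∈ F).length : ℤ) := by
  have hsplit := List.length_eq_length_filter_add (l := p.edges) fun e => decide (e ∈ F)
  rw [walkWeight, ← p.length_edges, hsplit]
  simp only [decide_not]
  push_cast
  ring

theorem walkWeight_le_length (p : G.Walk x y) : walkWeight F p ≤ p.length := by
  rw [walkWeight_eq_length_sub]
  omega

theorem neg_length_le_walkWeight (p : G.Walk x y) : -(p.length : ℤ) ≤ walkWeight F p := by
  have : (p.edges.filter fun e => e ∈ F).length ≤ p.length :=
    (List.length_filter_le _ _).trans_eq p.length_edges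
  rw [walkWeight_eq_length_sub]
  omega

theorem even_walkWeight_iff (p : G.Walk x y) : Even (walkWeight F p) ↔ Even p.length := by
  rw [walkWeight_eq_length_sub, Int.even_sub, Int.even_coe_nat]
  simp

theorem walkWeight_append (p : G.Walk x y) (q : G.Walk y z) :
    walkWeight F (p.append q) = walkWeight F p + walkWeight F q := by
  simp only [walkWeight, Walk.edges_append, List.filter_append, List.length_append]
  push_cast
  ring

theorem walkWeight_cons_le (h : G.Adj x y) (p : G.Walk y z) :
    walkWeight F (Walk.cons h p) ≤ 1 + walkWeight F p := by
  have := walkWeight_le_length (F := F) (Walk.cons h Walk.nil)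
  rw [← Walk.cons_nil_append, walkWeight_append]
  simp only [Walk.length_cons, Walk.length_nil] at this
  omega

theorem walkWeight_concat_le (p : G.Walk x y) (h : G.Adj y z) :
    walkWeight F (p.concat h) ≤ walkWeight F p + 1 := by
  have := walkWeight_le_length (F := F) (Walk.cons h Walk.nil)
  rw [Walk.concat_eq_append, walkWeight_append]
  simp only [Walk.length_cons, Walk.length_nil] at this
  omega

end Weight

section Distance

variable [Fintype V] {G : SimpleGraph V} {F : Set (Sym2 V)} {x y : V}

theorem bddBelow_walkWeight_isPath (G : SimpleGraph V) (F : Set (Sym2 V)) (x y : V) :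
    BddBelow {w : ℤ | ∃ p : G.Walk x y, p.IsPath ∧ walkWeight F p = w} := by
  refine ⟨-(Fintype.card V : ℤ), ?_⟩
  rintro w ⟨p, hp, rfl⟩
  have := neg_length_le_walkWeight (F := F) p
  have : p.length < Fintype.card V := hp.length_lt
  omega

theorem distF_le_walkWeight (p : G.Walk x y) (hp : p.IsPath) : distF G F x y ≤ walkWeight F p :=
  csInf_le (bddBelow_walkWeight_isPath G F x y) ⟨p, hp, rfl⟩

theorem exists_isPath_walkWeight_neg_of_distF_neg (h : distF G F x y < 0) :
    ∃ p : G.Walk x y, p.IsPath ∧ walkWeight F p < 0 := by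
  rcases Set.eq_empty_or_nonempty {w : ℤ | ∃ p : G.Walk x y, p.IsPath ∧ walkWeight F p = w}
    with hempty | hne
  · rw [distF, hempty, Int.csInf_empty] at h
    exact (lt_irrefl 0 h).elim
  · obtain ⟨p, hp, hw⟩ := Int.csInf_mem hne (bddBelow_walkWeight_isPath G F x y)
    exact ⟨p, hp, hw ▸ h⟩

end Distance

theorem distF_self (G : SimpleGraph V) (F : Set (Sym2 V)) (x : V) : distF G F x x = 0 := by
  have h : {w : ℤ | ∃ p : G.Walk x x, p.IsPath ∧ walkWeight F p = w} = {0} := by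
    ext w
    constructor
    · rintro ⟨p, hp, rfl⟩
      simp [Walk.isPath_iff_nil.mp hp |>.eq_nil, walkWeight]
    · rintro rfl
      exact ⟨Walk.nil, by simp, by simp [walkWeight]⟩
  rw [distF, h, csInf_singleton]

theorem distF_comm (G : SimpleGraph V) (F : Set (Sym2 V)) (x y : V) :
    distF G F x y = distF G F y x := by
  have key : ∀ a b : V, {w : ℤ | ∃ p : G.Walk a b, p.IsPath ∧ walkWeight F p = w} ⊆
      {w : ℤ | ∃ p : G.Walk b a, p.IsPath ∧ walkWeight F p = w} := by
    rintro a b w ⟨p, hp, rfl⟩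
    refine ⟨p.reverse, hp.reverse, ?_⟩
    simp only [walkWeight, Walk.edges_reverse, List.filter_reverse, List.length_reverse]
  rw [distF, distF, (key x y).antisymm (key y x)]

theorem SimpleGraph.Walk.IsTrail.even_ncard_incident {G : SimpleGraph V} {u : V}
    {c : G.Walk u u} (hc : c.IsTrail) (v : V) : Even {e ∈ c.edgeSet | v ∈ e}.ncard := by
  simp only [Walk.mem_edgeSet]
  rw [hc.edges_nodup.ncard_setOf_mem_and, ← List.countP_eq_length_filter]
  exact (hc.even_countP_edges_iff v).mpr fun h => absurd rfl h

section Join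

variable [Finite V] {G : SimpleGraph V} {T : Set V} {F : Set (Sym2 V)}

theorem IsJoin.symmDiff {E : Set (Sym2 V)} (hF : IsJoin G T F) (hE : E ⊆ G.edgeSet)
    (heven : ∀ v, Even {e ∈ E | v ∈ e}.ncard) : IsJoin G T (F ∆ E) := by
  refine ⟨symmDiff_le_sup.trans (Set.union_subset hF.1 hE), fun v => ?_⟩
  have hinc : {e ∈ F ∆ E | v ∈ e} = {e ∈ F | v ∈ e} ∆ {e ∈ E | v ∈ e} := by
    ext e
    simp only [Set.mem_ofPred_eq, Set.mem_symmDiff]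
    tauto
  have hcard := Set.ncard_symmDiff_add_two_mul_ncard_inter (Set.toFinite {e ∈ F | v ∈ e})
    (Set.toFinite {e ∈ E | v ∈ e})
  have heven_v := heven v
  rw [hF.2 v, hinc, Nat.odd_iff, Nat.odd_iff]
  rw [Nat.even_iff] at heven_v
  omega

theorem IsMinJoin.walkWeight_nonneg_of_isTrail (hF : IsMinJoin G T F) {u : V} (c : G.Walk u u)
    (hc : c.IsTrail) : 0 ≤ walkWeight F c := by
  have hjoin : IsJoin G T (F ∆ c.edgeSet) :=
    hF.1.symmDiff (fun e he => c.edges_subset_edgeSet he) hc.even_ncard_incident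
  have hmin := hF.2 _ hjoin
  have hcard := Set.ncard_symmDiff_add_two_mul_ncard_inter (Set.toFinite F)
    (Set.toFinite c.edgeSet)
  have hsplit := Set.ncard_inter_add_ncard_sdiff_eq_ncard c.edgeSet F
  have hweight : walkWeight F c = ((c.edgeSet \ F).ncard : ℤ) - (c.edgeSet ∩ F).ncard := by
    rw [walkWeight, ← hc.edges_nodup.ncard_setOf_mem_and, ← hc.edges_nodup.ncard_setOf_mem_and]
    rfl
  rw [Set.inter_comm] at hcard
  omega

theorem IsMinJoin.neg_one_le_walkWeight_of_adj (hF : IsMinJoin G T F) {y z : V}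
    (Q : G.Walk z y) (hQ : Q.IsPath) (h : G.Adj y z) : -1 ≤ walkWeight F Q := by
  by_cases he : s(y, z) ∈ Q.edges
  · have hlen := hQ.length_eq_one_of_mem_edges (Sym2.eq_swap ▸ he)
    have := neg_length_le_walkWeight (F := F) Q
    omega
  · have hcyc : (Walk.cons h Q).IsCycle := (Walk.cons_isCycle_iff Q h).mpr ⟨hQ, he⟩
    have := hF.walkWeight_nonneg_of_isTrail _ hcyc.isTrail
    have := walkWeight_cons_le (F := F) h Q
    omega

theorem IsMinJoin.exists_isPath_walkWeight_le_of_adj (hF : IsMinJoin G T F) {x y z : V}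
    (P : G.Walk x y) (hP : P.IsPath) (h : G.Adj y z) :
    ∃ R : G.Walk x z, R.IsPath ∧ walkWeight F R ≤ walkWeight F P + 1 := by
  by_cases hz : z ∈ P.support
  · refine ⟨P.takeUntil z hz, hP.takeUntil hz, ?_⟩
    have hsplit := congrArg (walkWeight F) (P.take_spec hz)
    rw [walkWeight_append] at hsplit
    have := hF.neg_one_le_walkWeight_of_adj (P.dropUntil z hz) (hP.dropUntil hz) h
    omega
  · exact ⟨P.concat h, hP.concat hz h, walkWeight_concat_le P h⟩

end Join

section Bipartite

variable {G : SimpleGraph V} {F : Set (Sym2 V)} {Vset A B : Set V}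

noncomputable def IsBipartitionOn.coloring (hbip : IsBipartitionOn G Vset A B) :
    G.Coloring Bool :=
  Coloring.mk (fun v => decide (v ∈ A)) fun {v w} hvw => by
    rcases hbip.2.2 v w hvw with ⟨hv, hw⟩ | ⟨hv, hw⟩
    · simp [hv, Set.disjoint_right.mp hbip.2.1 hw]
    · simp [hw, Set.disjoint_right.mp hbip.2.1 hv]

theorem IsBipartitionOn.mem_iff_of_even_walkWeight (hbip : IsBipartitionOn G Vset A B)
    {x z : V} (p : G.Walk x z) (hw : Even (walkWeight F p)) : x ∈ A ↔ z ∈ A := by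
  have hcolor : decide (x ∈ A) = true ↔ decide (z ∈ A) = true :=
    (hbip.coloring.even_length_iff_congr p).mp ((even_walkWeight_iff p).mp hw)
  simpa using hcolor

theorem MaxBipExtreme.mem_of_forall_distF_nonneg {X : Set V} (hX : MaxBipExtreme G F A B X)
    (hXA : X ⊆ A) {z : V} (hzA : z ∈ A) (hz : ∀ x ∈ X, 0 ≤ distF G F x z) : z ∈ X := by
  have hext : IsExtremeSet G F (insert z X) := by
    rintro x (rfl | hx) y (rfl | hy)
    · rw [distF_self]
    · rw [distF_comm]
      exact hz y hy
    · exact hz x hx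
    · exact hX.1 x hx y hy
  rw [← hX.2.2 _ hext (Or.inl (Set.insert_subset hzA hXA)) (Set.subset_insert z X)]
  exact Set.mem_insert z X

end Bipartite

theorem stmt_3_general [Fintype V] (G : SimpleGraph V) (T A B X : Set V) (F : Set (Sym2 V))
    (hbip : IsBipartitionOn G Set.univ A B)
    (hF : IsMinJoin G T F) (hXA : X ⊆ A) (hX : MaxBipExtreme G F A B X) :
    ∀ y ∈ Dset G F Set.univ X, ∀ z ∈ Cset G F Set.univ X, ¬ G.Adj y z := by
  rintro y ⟨-, -, x, hxX, hxy⟩ z ⟨⟨-, hzX⟩, hzD⟩ hadj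
  have hzC : ∀ x' ∈ X, 0 ≤ distF G F x' z := fun x' hx' =>
    not_lt.mp fun hneg => hzD ⟨trivial, hzX, x', hx', hneg⟩
  obtain ⟨P, hP, hPneg⟩ := exists_isPath_walkWeight_neg_of_distF_neg hxy
  obtain ⟨R, hR, hRle⟩ := hF.exists_isPath_walkWeight_le_of_adj P hP hadj
  have hR0 : walkWeight F R = 0 :=
    le_antisymm (by omega) ((hzC x hxX).trans (distF_le_walkWeight R hR))
  have hzA : z ∈ A := (hbip.mem_iff_of_even_walkWeight R (hR0 ▸ Even.zero)).mp (hXA hxX)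
  exact hzX (hX.mem_of_forall_distF_nonneg hXA hzA hzC)

/-- For a maximal bipartitic extreme set `X ⊆ A` of a bipartite graft,
no edge of `G` joins a vertex of `D_X` to a vertex of `C_X`. -/
theorem stmt_3 [Fintype V] (G : SimpleGraph V) (T A B X : Set V) (F : Set (Sym2 V))
    (hGT : IsGraft G T) (hbip : IsBipartitionOn G Set.univ A B)
    (hF : IsMinJoin G T F) (hXA : X ⊆ A) (hX : MaxBipExtreme G F A B X) :
    ∀ y ∈ Dset G F Set.univ X, ∀ z ∈ Cset G F Set.univ X, ¬ G.Adj y z :=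
  stmt_3_general G T A B X F hbip hF hXA hX
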